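/- arXiv:1303.1307 — 4 statements merged into one kernel-verified Lean document; each statement's English description precedes it below -/
import Mathlib

section
/- On ℝ³ with coordinates (x, y, z), let g be the Riemannian metric g = dx² + dy² + (dz − x dy)²; explicitly, g at the point with x-coordinate x sends vectors a, b ∈ ℝ³ to a_x b_x + a_y b_y + (a_z − x a_y)(b_z − x b_y). Then the real vector space of smooth conformal Killing fields of g on ℝ³ is finite-dimensional of dimension exactly 4; it is spanned by the Killing fields ∂_y, ∂_z, ∂_x + y ∂_z, and y ∂_x − x ∂_y + ½(y² − x²) ∂_z. -/
open scoped BigOperators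

noncomputable section

/-- Points/vectors of `ℝⁿ`. -/
abbrev Vec (n : ℕ) := Fin n → ℝ

/-- Evaluation of a metric (given by its component functions `g p i j`) as a
bilinear form at `p`. -/
def metricEval {n : ℕ} (g : Vec n → Fin n → Fin n → ℝ) (p : Vec n) (u v : Vec n) : ℝ :=
  ∑ i, ∑ j, u i * g p i j * v j

/-- The Lie derivative equation `L_X g = f · g` holds at every point of `U`:
`(D_p g)(X(p))(u,v) + g(p)(D_p X(u), v) + g(p)(u, D_p X(v)) = f(p) · g(p)(u,v)`. -/
def LieDerivEq {n : ℕ} (U : Set (Vec n)) (g : Vec n → Fin n → Fin n → ℝ)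
    (X : Vec n → Vec n) (f : Vec n → ℝ) : Prop :=
  ∀ p ∈ U, ∀ u v : Vec n,
    (∑ i, ∑ j, u i * fderiv ℝ (fun q => g q i j) p (X p) * v j)
      + metricEval g p (fderiv ℝ X p u) v + metricEval g p u (fderiv ℝ X p v)
      = f p * metricEval g p u v

/-- A smooth conformal Killing field of `g` on `U`. -/
def IsConformalKillingOn {n : ℕ} (U : Set (Vec n)) (g : Vec n → Fin n → Fin n → ℝ)
    (X : Vec n → Vec n) : Prop :=
  ContDiffOn ℝ (⊤ : ℕ∞) X U ∧ ∃ f : Vec n → ℝ, LieDerivEq U g X f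

/-- A smooth Killing field of `g` on `U` (`L_X g = 0`). -/
def IsKillingOn {n : ℕ} (U : Set (Vec n)) (g : Vec n → Fin n → Fin n → ℝ)
    (X : Vec n → Vec n) : Prop :=
  ContDiffOn ℝ (⊤ : ℕ∞) X U ∧ LieDerivEq U g X fun _ => 0

/-- A smooth homothety of `g` on `U` (`L_X g = c · g` with `c` a nonzero constant). -/
def IsHomothetyOn {n : ℕ} (U : Set (Vec n)) (g : Vec n → Fin n → Fin n → ℝ)
    (X : Vec n → Vec n) : Prop :=
  ContDiffOn ℝ (⊤ : ℕ∞) X U ∧ ∃ c : ℝ, c ≠ 0 ∧ LieDerivEq U g X fun _ => c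

/-- The bilinear form of the Riemannian metric `dx² + dy² + (dz − x dy)²`
on `ℝ³` with coordinates `(x, y, z)` (indices `0,1,2`). -/
def rie3Form (x a b : Vec 3) : ℝ :=
  a 0 * b 0 + a 1 * b 1 + (a 2 - x 0 * a 1) * (b 2 - x 0 * b 1)

/-- Components of the metric `dx² + dy² + (dz − x dy)²`. -/
def rie3Metric (x : Vec 3) (i j : Fin 3) : ℝ := rie3Form x (Pi.single i 1) (Pi.single j 1)

/-- `∂_y`. -/
def rie3X1 : Vec 3 → Vec 3 := fun _ => ![0, 1, 0]
/-- `∂_z`. -/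
def rie3X2 : Vec 3 → Vec 3 := fun _ => ![0, 0, 1]
/-- `∂_x + y ∂_z`. -/
def rie3X3 : Vec 3 → Vec 3 := fun x => ![1, 0, x 1]
/-- `y ∂_x − x ∂_y + ½(y² − x²) ∂_z`. -/
def rie3X4 : Vec 3 → Vec 3 := fun x => ![x 1, -x 0, (1 / 2) * ((x 1) ^ 2 - (x 0) ^ 2)]

/-- The four fields. -/
def rie3Basis : Fin 4 → (Vec 3 → Vec 3) := ![rie3X1, rie3X2, rie3X3, rie3X4]

/-!
Write a vector field in the orthonormal frame `e₀ = ∂ₓ`, `e₁ = ∂_y + x ∂_z`, `e₂ = ∂_z` as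
`a e₀ + b e₁ + c e₂`. Since the only nonzero bracket is `[e₀, e₁] = e₂`, the conformal Killing
equation becomes a linear system with constant coefficients,
`e₀ a = e₁ b = e₂ c = σ`, `e₀ b = -e₁ a`, `e₀ c = -e₂ a - b`, `e₁ c = a - e₂ b`,
which only uses that the `eᵢ` are linear operators satisfying the Heisenberg relations.
Commuting derivatives expresses all second derivatives of `a, b, c` and then those of `σ` through
lower-order data; the remaining integrability condition `[e₁, e₂] (e₀ σ) = 0` reads
`-7σ/8 = 5σ/8`. Hence `σ = 0`, the field is Killing, `e₁ a` is constant, and the system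
integrates to the span of the four given fields.
-/
open scoped ContDiff

section HeisenbergTriple

variable {K M : Type*} [CommRing K] [AddCommGroup M] [Module K M]

structure IsHeisenbergTriple (D₀ D₁ D₂ : Module.End K M) : Prop where
  lie₀₁ : ⁅D₀, D₁⁆ = D₂
  lie₀₂ : ⁅D₀, D₂⁆ = 0
  lie₁₂ : ⁅D₁, D₂⁆ = 0

structure IsFrameConformalKilling (D₀ D₁ D₂ : Module.End K M) (a b c σ : M) : Prop where
  d₀_a : D₀ a = σ
  d₁_b : D₁ b = σ
  d₂_c : D₂ c = σ
  d₀_b : D₀ b = -D₁ a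
  d₀_c : D₀ c = -D₂ a - b
  d₁_c : D₁ c = a - D₂ b

variable {D₀ D₁ D₂ : Module.End K M}

namespace IsHeisenbergTriple

theorem d₁_d₀ (hD : IsHeisenbergTriple D₀ D₁ D₂) (u : M) : D₁ (D₀ u) = D₀ (D₁ u) - D₂ u := by
  rw [← hD.lie₀₁, Ring.lie_def, LinearMap.sub_apply, Module.End.mul_apply, Module.End.mul_apply,
    sub_sub_cancel]

theorem d₀_d₂ (hD : IsHeisenbergTriple D₀ D₁ D₂) (u : M) : D₀ (D₂ u) = D₂ (D₀ u) := by
  simpa [Ring.lie_def, sub_eq_zero] using LinearMap.congr_fun hD.lie₀₂ u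

theorem d₁_d₂ (hD : IsHeisenbergTriple D₀ D₁ D₂) (u : M) : D₁ (D₂ u) = D₂ (D₁ u) := by
  simpa [Ring.lie_def, sub_eq_zero] using LinearMap.congr_fun hD.lie₁₂ u

end IsHeisenbergTriple

namespace IsFrameConformalKilling

variable {a b c σ : M}

theorem d₂_d₂_a (h : IsFrameConformalKilling D₀ D₁ D₂ a b c σ)
    (hD : IsHeisenbergTriple D₀ D₁ D₂) : D₂ (D₂ a) = -D₀ σ - D₂ b := by
  have := hD.d₀_d₂ c
  simp only [h.d₀_c, h.d₂_c, map_sub, map_neg] at this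
  linear_combination (norm := module) this

theorem d₂_d₂_b (h : IsFrameConformalKilling D₀ D₁ D₂ a b c σ)
    (hD : IsHeisenbergTriple D₀ D₁ D₂) : D₂ (D₂ b) = D₂ a - D₁ σ := by
  have := hD.d₁_d₂ c
  simp only [h.d₁_c, h.d₂_c, map_sub] at this
  linear_combination (norm := module) this

theorem d₁_d₁_a (h : IsFrameConformalKilling D₀ D₁ D₂ a b c σ)
    (hD : IsHeisenbergTriple D₀ D₁ D₂) : D₁ (D₁ a) = D₂ b - D₀ σ := by
  have := hD.d₁_d₀ b
  simp only [h.d₀_b, h.d₁_b, map_neg] at this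
  linear_combination (norm := module) -this

theorem d₀_d₁_a (h : IsFrameConformalKilling D₀ D₁ D₂ a b c σ)
    (hD : IsHeisenbergTriple D₀ D₁ D₂) : D₀ (D₁ a) = D₂ a + D₁ σ := by
  have := hD.d₁_d₀ a
  simp only [h.d₀_a] at this
  linear_combination (norm := module) -this

end IsFrameConformalKilling

end HeisenbergTriple

section ConformalFactor

variable {K M : Type*} [Field K] [CharZero K] [AddCommGroup M] [Module K M]
  {D₀ D₁ D₂ : Module.End K M} {a b c σ : M}

namespace IsFrameConformalKilling

theorem d₂_d₁_a (h : IsFrameConformalKilling D₀ D₁ D₂ a b c σ)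
    (hD : IsHeisenbergTriple D₀ D₁ D₂) : D₂ (D₁ a) = -((2 : K)⁻¹ • σ) := by
  have := hD.d₁_d₀ c
  simp only [h.d₀_c, h.d₁_c, map_sub, map_neg, h.d₀_a, h.d₁_b, h.d₂_c, hD.d₀_d₂, hD.d₁_d₂,
    h.d₀_b] at this
  linear_combination (norm := module) -(2 : K)⁻¹ • this

theorem d₀_d₁_sigma (h : IsFrameConformalKilling D₀ D₁ D₂ a b c σ)
    (hD : IsHeisenbergTriple D₀ D₁ D₂) : D₀ (D₁ σ) = (2 : K)⁻¹ • D₂ σ := by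
  have := hD.d₁_d₂ (D₂ a)
  simp only [map_sub, map_neg, map_smul, h.d₁_b, hD.d₁_d₂, h.d₂_d₁_a hD, h.d₂_d₂_a hD,
    hD.d₁_d₀] at this
  linear_combination (norm := module) -this

theorem d₂_d₀_sigma (h : IsFrameConformalKilling D₀ D₁ D₂ a b c σ)
    (hD : IsHeisenbergTriple D₀ D₁ D₂) : D₂ (D₀ σ) = D₂ a - (2 : K)⁻¹ • D₁ σ := by
  have := hD.d₁_d₂ (D₁ a)
  simp only [map_sub, map_neg, map_smul, h.d₂_d₁_a hD, h.d₂_d₂_b hD, h.d₁_d₁_a hD] at this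
  linear_combination (norm := module) this

theorem d₂_d₁_sigma (h : IsFrameConformalKilling D₀ D₁ D₂ a b c σ)
    (hD : IsHeisenbergTriple D₀ D₁ D₂) : D₂ (D₁ σ) = (2 : K)⁻¹ • D₀ σ + D₂ b := by
  have := hD.d₀_d₂ (D₁ a)
  simp only [map_add, map_neg, map_smul, h.d₂_d₁_a hD, h.d₂_d₂_a hD, h.d₀_d₁_a hD] at this
  linear_combination (norm := module) -this

theorem d₁_d₁_sigma (h : IsFrameConformalKilling D₀ D₁ D₂ a b c σ)
    (hD : IsHeisenbergTriple D₀ D₁ D₂) : D₁ (D₁ σ) = (3 / 4 : K) • σ := by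
  have hρ := hD.d₁_d₀ (D₁ a)
  have hα := hD.d₀_d₂ (D₂ a)
  have hβ := hD.d₁_d₂ (D₂ b)
  simp only [map_add, map_sub, map_neg, h.d₀_a, h.d₁_b, h.d₀_b, hD.d₀_d₂, hD.d₁_d₂,
    h.d₂_d₁_a hD, h.d₂_d₂_a hD, h.d₂_d₂_b hD, h.d₁_d₁_a hD, h.d₀_d₁_a hD] at hρ hα hβ
  linear_combination (norm := module) (2 : K)⁻¹ • (hρ + hα - hβ)

theorem d₂_d₂_sigma (h : IsFrameConformalKilling D₀ D₁ D₂ a b c σ)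
    (hD : IsHeisenbergTriple D₀ D₁ D₂) : D₂ (D₂ σ) = -((5 / 4 : K) • σ) := by
  have hβ := hD.d₁_d₂ (D₂ b)
  simp only [map_sub, h.d₁_b, hD.d₁_d₂, h.d₂_d₁_a hD, h.d₂_d₂_b hD, h.d₁_d₁_sigma hD] at hβ
  linear_combination (norm := module) -hβ

theorem sigma_eq_zero (h : IsFrameConformalKilling D₀ D₁ D₂ a b c σ)
    (hD : IsHeisenbergTriple D₀ D₁ D₂) : σ = 0 := by
  have := hD.d₁_d₂ (D₀ σ)
  simp only [map_sub, map_smul, hD.d₁_d₂, hD.d₁_d₀, h.d₂_d₀_sigma hD, h.d₂_d₁_a hD,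
    h.d₁_d₁_sigma hD, h.d₀_d₁_sigma hD, h.d₂_d₂_sigma hD] at this
  linear_combination (norm := module) -(2 / 3 : K) • this

theorem d₂_a_eq_zero (h : IsFrameConformalKilling D₀ D₁ D₂ a b c σ)
    (hD : IsHeisenbergTriple D₀ D₁ D₂) : D₂ a = 0 := by
  simpa [h.sigma_eq_zero hD, eq_comm] using h.d₂_d₀_sigma hD

theorem d₂_b_eq_zero (h : IsFrameConformalKilling D₀ D₁ D₂ a b c σ)
    (hD : IsHeisenbergTriple D₀ D₁ D₂) : D₂ b = 0 := by
  simpa [h.sigma_eq_zero hD, eq_comm] using h.d₂_d₁_sigma hD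

end IsFrameConformalKilling

end ConformalFactor

section SmoothFunctions

variable {E : Type*} [NormedAddCommGroup E] [NormedSpace ℝ E]

variable (E) in
def smoothFunctions : Subalgebra ℝ (E → ℝ) where
  carrier := {F | ContDiff ℝ ∞ F}
  mul_mem' {F G} (hF : ContDiff ℝ ∞ F) (hG : ContDiff ℝ ∞ G) := hF.mul hG
  add_mem' {F G} (hF : ContDiff ℝ ∞ F) (hG : ContDiff ℝ ∞ G) := hF.add hG
  algebraMap_mem' r := (contDiff_const : ContDiff ℝ ∞ fun _ : E => r)

theorem mem_smoothFunctions {F : E → ℝ} : F ∈ smoothFunctions E ↔ ContDiff ℝ ∞ F := Iff.rfl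

theorem contDiff_smoothFunctions (F : smoothFunctions E) : ContDiff ℝ ∞ (F : E → ℝ) := F.2

theorem differentiable_smoothFunctions (F : smoothFunctions E) : Differentiable ℝ (F : E → ℝ) :=
  (contDiff_smoothFunctions F).differentiable (by simp)

def derivAlong (V : E → E) (hV : ContDiff ℝ ∞ V) :
    Derivation ℝ (smoothFunctions E) (smoothFunctions E) :=
  Derivation.mk'
    { toFun F := ⟨fun x => fderiv ℝ (F : E → ℝ) x (V x),
        mem_smoothFunctions.2 (((contDiff_smoothFunctions F).fderiv_right le_rfl).clm_apply hV)⟩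
      map_add' F G := by
        ext x
        simp [fderiv_add (differentiable_smoothFunctions F x) (differentiable_smoothFunctions G x)]
      map_smul' r F := by
        ext x
        simp [fderiv_const_smul (differentiable_smoothFunctions F x)] }
    fun F G => by
      ext x
      simp [fderiv_mul (differentiable_smoothFunctions F x) (differentiable_smoothFunctions G x)]

theorem derivAlong_apply (V : E → E) (hV : ContDiff ℝ ∞ V) (F : smoothFunctions E) (x : E) :
    (derivAlong V hV F : E → ℝ) x = fderiv ℝ F x (V x) := rfl

theorem lie_derivAlong_of_lieBracket_eq {U V W : E → E} (hU : ContDiff ℝ ∞ U)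
    (hV : ContDiff ℝ ∞ V) (hW : ContDiff ℝ ∞ W) (h : VectorField.lieBracket ℝ V W = U) :
    ⁅derivAlong V hV, derivAlong W hW⁆ = derivAlong U hU := by
  subst h
  ext F x
  rw [Derivation.commutator_apply]
  exact (VectorField.fderiv_apply_lieBracket (contDiff_smoothFunctions F).contDiffAt
    (by simp; decide) (hW.differentiable (by simp) x) (hV.differentiable (by simp) x)).symm

theorem derivAlong_zero : derivAlong (fun _ : E => (0 : E)) contDiff_zero_fun = 0 := by
  ext F x
  simp [derivAlong_apply]

theorem eq_algebraMap_of_derivAlong_eq_zero {ι : Type*} {V : ι → E → E}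
    (hV : ∀ i, ContDiff ℝ ∞ (V i))
    (hspan : ∀ x, Submodule.span ℝ (Set.range fun i => V i x) = ⊤) {F : smoothFunctions E}
    (hF : ∀ i, derivAlong (V i) (hV i) F = 0) :
    F = algebraMap ℝ (smoothFunctions E) ((F : E → ℝ) 0) := by
  ext x
  refine is_const_of_fderiv_eq_zero (differentiable_smoothFunctions F) (fun y => ?_) x 0
  refine ContinuousLinearMap.coe_injective (LinearMap.ext_on_range (hspan y) fun i => ?_)
  simpa [derivAlong_apply] using congr_fun (congrArg Subtype.val (hF i)) y

end SmoothFunctions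

def heisenbergFrame : Fin 3 → Vec 3 → Vec 3 :=
  ![fun _ => ![1, 0, 0], fun p => ![0, 1, p 0], fun _ => ![0, 0, 1]]

theorem heisenbergFrame_one : heisenbergFrame 1 = fun p => p 0 • ![0, 0, 1] + ![0, 1, 0] := by
  ext p k
  fin_cases k <;> simp [heisenbergFrame]

theorem contDiff_heisenbergFrame (i : Fin 3) : ContDiff ℝ ∞ (heisenbergFrame i) := by
  fin_cases i
  · exact contDiff_const
  · exact heisenbergFrame_one ▸ ((contDiff_apply ℝ ℝ 0).smul contDiff_const).add contDiff_const
  · exact contDiff_const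

theorem fderiv_heisenbergFrame_one (p u : Vec 3) :
    fderiv ℝ (heisenbergFrame 1) p u = u 0 • ![0, 0, 1] := by
  rw [heisenbergFrame_one, (((hasFDerivAt_apply (𝕜 := ℝ) 0 p).smul_const _).add_const _).fderiv]
  simp

theorem lieBracket_heisenbergFrame_zero_one :
    VectorField.lieBracket ℝ (heisenbergFrame 0) (heisenbergFrame 1) = heisenbergFrame 2 := by
  ext p k
  simp only [VectorField.lieBracket_eq, fderiv_heisenbergFrame_one]
  fin_cases k <;> simp [heisenbergFrame]

theorem lieBracket_heisenbergFrame_zero_two :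
    VectorField.lieBracket ℝ (heisenbergFrame 0) (heisenbergFrame 2) = 0 := by
  ext p k
  simp [VectorField.lieBracket_eq, heisenbergFrame]

theorem lieBracket_heisenbergFrame_one_two :
    VectorField.lieBracket ℝ (heisenbergFrame 1) (heisenbergFrame 2) = 0 := by
  ext p k
  simp only [VectorField.lieBracket_eq, fderiv_heisenbergFrame_one]
  simp [heisenbergFrame]

theorem span_heisenbergFrame (p : Vec 3) :
    Submodule.span ℝ (Set.range fun i => heisenbergFrame i p) = ⊤ := by
  refine Submodule.eq_top_iff'.2 fun u => (Submodule.mem_span_range_iff_exists_fun ℝ).2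
    ⟨![u 0, u 1, u 2 - p 0 * u 1], ?_⟩
  ext k
  fin_cases k
  · simp [Fin.sum_univ_three, heisenbergFrame]
  · simp [Fin.sum_univ_three, heisenbergFrame]
  · simp [Fin.sum_univ_three, heisenbergFrame]
    ring

def frameDeriv (i : Fin 3) : Module.End ℝ (smoothFunctions (Vec 3)) :=
  derivAlong (heisenbergFrame i) (contDiff_heisenbergFrame i)

theorem frameDeriv_mul (i : Fin 3) (F G : smoothFunctions (Vec 3)) :
    frameDeriv i (F * G) = F * frameDeriv i G + G * frameDeriv i F := by
  simp [frameDeriv, Derivation.leibniz]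

theorem isHeisenbergTriple_frameDeriv :
    IsHeisenbergTriple (frameDeriv 0) (frameDeriv 1) (frameDeriv 2) := by
  refine ⟨?_, ?_, ?_⟩ <;> rw [frameDeriv, frameDeriv, ← Derivation.commutator_coe_linear_map]
  · rw [lie_derivAlong_of_lieBracket_eq _ _ _ lieBracket_heisenbergFrame_zero_one, frameDeriv]
  · rw [lie_derivAlong_of_lieBracket_eq contDiff_zero_fun _ _ lieBracket_heisenbergFrame_zero_two,
      derivAlong_zero, Derivation.coe_zero_linearMap]
  · rw [lie_derivAlong_of_lieBracket_eq contDiff_zero_fun _ _ lieBracket_heisenbergFrame_one_two,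
      derivAlong_zero, Derivation.coe_zero_linearMap]

theorem eq_algebraMap_of_frameDeriv_eq_zero {F : smoothFunctions (Vec 3)}
    (hF : ∀ i, frameDeriv i F = 0) :
    F = algebraMap ℝ (smoothFunctions (Vec 3)) ((F : Vec 3 → ℝ) 0) :=
  eq_algebraMap_of_derivAlong_eq_zero contDiff_heisenbergFrame span_heisenbergFrame hF

def coordFn {n : ℕ} (j : Fin n) : smoothFunctions (Vec n) :=
  ⟨fun q => q j, mem_smoothFunctions.2 (contDiff_apply ℝ ℝ j)⟩

theorem coordFn_apply {n : ℕ} (j : Fin n) (x : Vec n) : (coordFn j : Vec n → ℝ) x = x j := rfl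

theorem derivAlong_coordFn {n : ℕ} {V : Vec n → Vec n} (hV : ContDiff ℝ ∞ V) (j : Fin n)
    (x : Vec n) : (derivAlong V hV (coordFn j) : Vec n → ℝ) x = V x j := by
  simp [derivAlong_apply, coordFn, (hasFDerivAt_apply j x).fderiv]

theorem frameDeriv_coordFn_zero (i : Fin 3) :
    frameDeriv i (coordFn 0) = if i = 0 then 1 else 0 := by
  ext x
  fin_cases i <;> simp [frameDeriv, derivAlong_coordFn, heisenbergFrame]

theorem frameDeriv_coordFn_one (i : Fin 3) :
    frameDeriv i (coordFn 1) = if i = 1 then 1 else 0 := by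
  ext x
  fin_cases i <;> simp [frameDeriv, derivAlong_coordFn, heisenbergFrame]

def smoothComponent {E : Type*} [NormedAddCommGroup E] [NormedSpace ℝ E] {n : ℕ}
    {Y : E → Vec n} (hY : ContDiff ℝ ∞ Y) (j : Fin n) : smoothFunctions E :=
  ⟨fun x => Y x j, contDiff_pi.1 hY j⟩

theorem smoothComponent_apply {E : Type*} [NormedAddCommGroup E] [NormedSpace ℝ E] {n : ℕ}
    {Y : E → Vec n} (hY : ContDiff ℝ ∞ Y) (j : Fin n) (x : E) :
    (smoothComponent hY j : E → ℝ) x = Y x j := rfl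

theorem derivAlong_smoothComponent {E : Type*} [NormedAddCommGroup E] [NormedSpace ℝ E]
    {n : ℕ} {V : E → E} (hV : ContDiff ℝ ∞ V) {Y : E → Vec n} (hY : ContDiff ℝ ∞ Y) (j : Fin n)
    (x : E) : (derivAlong V hV (smoothComponent hY j) : E → ℝ) x = fderiv ℝ Y x (V x) j := by
  rw [derivAlong_apply, smoothComponent, fderiv_apply (hY.differentiable (by simp) x)]
  rfl

theorem metricEval_rie3Metric (p u v : Vec 3) : metricEval rie3Metric p u v = rie3Form p u v := by
  simp [metricEval, rie3Metric, rie3Form, Fin.sum_univ_three, Pi.single_apply]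
  ring

theorem fderiv_rie3Form (u v p w : Vec 3) :
    fderiv ℝ (fun q => rie3Form q u v) p w =
      -w 0 * (u 1 * (v 2 - p 0 * v 1) + (u 2 - p 0 * u 1) * v 1) := by
  have hx := hasFDerivAt_apply (𝕜 := ℝ) 0 p
  unfold rie3Form
  rw [(((hx.mul_const (u 1)).const_sub (u 2)).fun_mul ((hx.mul_const (v 1)).const_sub (v 2))
    |>.const_add (u 0 * v 0 + u 1 * v 1)).fderiv]
  simp
  ring

theorem lieDerivEq_rie3Metric_iff {X : Vec 3 → Vec 3} {f : Vec 3 → ℝ} :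
    LieDerivEq Set.univ rie3Metric X f ↔ ∀ p u v : Vec 3,
      -X p 0 * (u 1 * (v 2 - p 0 * v 1) + (u 2 - p 0 * u 1) * v 1) +
        rie3Form p (fderiv ℝ X p u) v + rie3Form p u (fderiv ℝ X p v) =
        f p * rie3Form p u v := by
  have hsum : ∀ p w u v : Vec 3,
      ∑ i, ∑ j, u i * fderiv ℝ (fun q => rie3Metric q i j) p w * v j =
        -w 0 * (u 1 * (v 2 - p 0 * v 1) + (u 2 - p 0 * u 1) * v 1) := by
    intro p w u v
    simp only [rie3Metric, fderiv_rie3Form]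
    simp [Fin.sum_univ_three, Pi.single_apply]
    ring
  simp only [LieDerivEq, Set.mem_univ, true_imp_iff, hsum, metricEval_rie3Metric]

theorem fderiv_rie3X3 (p u : Vec 3) : fderiv ℝ rie3X3 p u = ![0, 0, u 1] := by
  have h : rie3X3 = fun x => x 1 • ![0, 0, 1] + ![1, 0, 0] := by
    ext x k
    fin_cases k <;> simp [rie3X3]
  rw [h, (((hasFDerivAt_apply (𝕜 := ℝ) 1 p).smul_const _).add_const _).fderiv]
  simp

theorem fderiv_rie3X4 (p u : Vec 3) :
    fderiv ℝ rie3X4 p u = ![u 1, -u 0, p 1 * u 1 - p 0 * u 0] := by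
  have h : rie3X4 = fun x =>
      x 1 • ![1, 0, 0] + x 0 • ![0, -1, 0] + (2⁻¹ * (x 1 * x 1 - x 0 * x 0)) • ![0, 0, 1] := by
    ext x k
    fin_cases k <;> simp [rie3X4]
    ring
  have h₀ := hasFDerivAt_apply (𝕜 := ℝ) 0 p
  have h₁ := hasFDerivAt_apply (𝕜 := ℝ) 1 p
  rw [h, ((h₁.smul_const _).fun_add (h₀.smul_const _) |>.fun_add
    ((((h₁.fun_mul h₁).fun_sub (h₀.fun_mul h₀)).const_mul _).smul_const _)).fderiv]
  ext k
  fin_cases k <;> simp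
  ring

theorem contDiff_rie3X3 : ContDiff ℝ ∞ rie3X3 := by
  refine contDiff_pi.2 fun k => ?_
  fin_cases k <;> simp [rie3X3] <;> fun_prop

theorem contDiff_rie3X4 : ContDiff ℝ ∞ rie3X4 := by
  refine contDiff_pi.2 fun k => ?_
  fin_cases k <;> simp [rie3X4] <;> fun_prop

theorem isKillingOn_rie3X1 : IsKillingOn Set.univ rie3Metric rie3X1 := by
  refine ⟨contDiffOn_const, lieDerivEq_rie3Metric_iff.2 fun p u v => ?_⟩
  unfold rie3X1
  simp [rie3Form]

theorem isKillingOn_rie3X2 : IsKillingOn Set.univ rie3Metric rie3X2 := by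
  refine ⟨contDiffOn_const, lieDerivEq_rie3Metric_iff.2 fun p u v => ?_⟩
  unfold rie3X2
  simp [rie3Form]

theorem isKillingOn_rie3X3 : IsKillingOn Set.univ rie3Metric rie3X3 := by
  refine ⟨?_, lieDerivEq_rie3Metric_iff.2 fun p u v => ?_⟩
  · exact contDiff_rie3X3.contDiffOn
  · simp [fderiv_rie3X3, rie3X3, rie3Form]

theorem isKillingOn_rie3X4 : IsKillingOn Set.univ rie3Metric rie3X4 := by
  refine ⟨?_, lieDerivEq_rie3Metric_iff.2 fun p u v => ?_⟩
  · exact contDiff_rie3X4.contDiffOn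
  · simp [fderiv_rie3X4, rie3X4, rie3Form]
    ring

theorem linearIndependent_rie3Basis : LinearIndependent ℝ rie3Basis := by
  refine Fintype.linearIndependent_iff.2 fun g hg => ?_
  have h : ∀ p k, ∑ i, g i * rie3Basis i p k = 0 := fun p k => by
    simpa using congrFun (congrFun hg p) k
  have h₀ := h 0 0
  have h₁ := h 0 1
  have h₂ := h 0 2
  have h₃ := h ![0, 1, 0] 0
  simp [Fin.sum_univ_four, rie3Basis, rie3X1, rie3X2, rie3X3, rie3X4] at h₀ h₁ h₂ h₃
  intro i
  fin_cases i <;> simp <;> linarith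

theorem isFrameConformalKilling_of_lieDerivEq {Y : Vec 3 → Vec 3} (hY : ContDiff ℝ ∞ Y)
    {f : Vec 3 → ℝ} (h : LieDerivEq Set.univ rie3Metric Y f) :
    IsFrameConformalKilling (frameDeriv 0) (frameDeriv 1) (frameDeriv 2) (smoothComponent hY 0)
      (smoothComponent hY 1) (smoothComponent hY 2 - coordFn 0 * smoothComponent hY 1)
      (frameDeriv 0 (smoothComponent hY 0)) := by
  -- `Y = a e₀ + b e₁ + c e₂` with `a = Y₀`, `b = Y₁`, `c = Y₂ - x Y₁`; `kᵢⱼ` below is the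
  -- conformal Killing equation evaluated on `(eᵢ, eⱼ)`.
  have key := fun p i j =>
    lieDerivEq_rie3Metric_iff.1 h p (heisenbergFrame i p) (heisenbergFrame j p)
  have hD : ∀ i j p, (frameDeriv i (smoothComponent hY j) : Vec 3 → ℝ) p =
      fderiv ℝ Y p (heisenbergFrame i p) j := fun i j p => derivAlong_smoothComponent _ hY j p
  refine ⟨rfl, ?_, ?_, ?_, ?_, ?_⟩ <;> ext p
  all_goals
    have k₀₀ := key p 0 0
    have k₁₁ := key p 1 1
    have k₂₂ := key p 2 2
    have k₀₁ := key p 0 1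
    have k₀₂ := key p 0 2
    have k₁₂ := key p 1 2
    simp [frameDeriv_mul, frameDeriv_coordFn_zero, hD, heisenbergFrame, rie3Form, coordFn_apply,
      smoothComponent_apply] at k₀₀ k₁₁ k₂₂ k₀₁ k₀₂ k₁₂ ⊢
    linarith

namespace IsFrameConformalKilling

variable {a b c σ : smoothFunctions (Vec 3)}

theorem frameDeriv_one_eq_algebraMap
    (h : IsFrameConformalKilling (frameDeriv 0) (frameDeriv 1) (frameDeriv 2) a b c σ) :
    frameDeriv 1 a = algebraMap ℝ _ ((frameDeriv 1 a : Vec 3 → ℝ) 0) := by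
  have hD := isHeisenbergTriple_frameDeriv
  have hσ := h.sigma_eq_zero hD
  refine eq_algebraMap_of_frameDeriv_eq_zero fun i => ?_
  fin_cases i
  · simpa [hσ, h.d₂_a_eq_zero hD] using h.d₀_d₁_a hD
  · simpa [hσ, h.d₂_b_eq_zero hD] using h.d₁_d₁_a hD
  · simpa [hσ] using h.d₂_d₁_a hD

theorem a_eq
    (h : IsFrameConformalKilling (frameDeriv 0) (frameDeriv 1) (frameDeriv 2) a b c σ) :
    a = algebraMap ℝ _ ((a : Vec 3 → ℝ) 0) + ((frameDeriv 1 a : Vec 3 → ℝ) 0) • coordFn 1 := by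
  have hD := isHeisenbergTriple_frameDeriv
  set k := (frameDeriv 1 a : Vec 3 → ℝ) 0
  have hρ : frameDeriv 1 a = algebraMap ℝ _ k := h.frameDeriv_one_eq_algebraMap
  have hF : ∀ i, frameDeriv i (a - k • coordFn 1) = 0 := by
    intro i
    fin_cases i
    · simpa [frameDeriv_coordFn_one, h.sigma_eq_zero hD] using h.d₀_a
    · simp [hρ, frameDeriv_coordFn_one, Algebra.algebraMap_eq_smul_one]
    · simpa [frameDeriv_coordFn_one] using h.d₂_a_eq_zero hD
  have := eq_algebraMap_of_frameDeriv_eq_zero hF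
  simp only [Subalgebra.coe_sub, Subalgebra.coe_smul, Pi.sub_apply, Pi.smul_apply, coordFn_apply,
    Pi.zero_apply, smul_zero, sub_zero] at this
  rw [← this, sub_add_cancel]

theorem b_eq
    (h : IsFrameConformalKilling (frameDeriv 0) (frameDeriv 1) (frameDeriv 2) a b c σ) :
    b = algebraMap ℝ _ ((b : Vec 3 → ℝ) 0) - ((frameDeriv 1 a : Vec 3 → ℝ) 0) • coordFn 0 := by
  have hD := isHeisenbergTriple_frameDeriv
  set k := (frameDeriv 1 a : Vec 3 → ℝ) 0
  have hρ : frameDeriv 1 a = algebraMap ℝ _ k := h.frameDeriv_one_eq_algebraMap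
  have hF : ∀ i, frameDeriv i (b + k • coordFn 0) = 0 := by
    intro i
    fin_cases i
    · simp [hρ, frameDeriv_coordFn_zero, h.d₀_b, Algebra.algebraMap_eq_smul_one]
    · simpa [frameDeriv_coordFn_zero, h.sigma_eq_zero hD] using h.d₁_b
    · simpa [frameDeriv_coordFn_zero] using h.d₂_b_eq_zero hD
  have := eq_algebraMap_of_frameDeriv_eq_zero hF
  simp only [Subalgebra.coe_add, Subalgebra.coe_smul, Pi.add_apply, Pi.smul_apply, coordFn_apply,
    Pi.zero_apply, smul_zero, add_zero] at this
  rw [← this, add_sub_cancel_right]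

theorem c_add_coordFn_mul_b_eq
    (h : IsFrameConformalKilling (frameDeriv 0) (frameDeriv 1) (frameDeriv 2) a b c σ) :
    c + coordFn 0 * b = algebraMap ℝ _ ((c : Vec 3 → ℝ) 0) + ((a : Vec 3 → ℝ) 0) • coordFn 1 +
      ((frameDeriv 1 a : Vec 3 → ℝ) 0 / 2) • (coordFn 1 * coordFn 1 - coordFn 0 * coordFn 0) := by
  have hD := isHeisenbergTriple_frameDeriv
  set k := (frameDeriv 1 a : Vec 3 → ℝ) 0
  have hρ : frameDeriv 1 a = algebraMap ℝ _ k := h.frameDeriv_one_eq_algebraMap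
  have hF : ∀ i, frameDeriv i (c + coordFn 0 * b - ((a : Vec 3 → ℝ) 0) • coordFn 1 -
      (k / 2) • (coordFn 1 * coordFn 1 - coordFn 0 * coordFn 0)) = 0 := by
    intro i
    fin_cases i
    · simp [frameDeriv_mul, frameDeriv_coordFn_zero, frameDeriv_coordFn_one, h.d₀_b, h.d₀_c, hρ,
        h.d₂_a_eq_zero hD, Algebra.algebraMap_eq_smul_one]
      ext p
      simp [coordFn_apply]
      ring
    · simp [frameDeriv_mul, frameDeriv_coordFn_zero, frameDeriv_coordFn_one, h.d₁_b, h.d₁_c,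
        h.sigma_eq_zero hD, h.d₂_b_eq_zero hD]
      nth_rewrite 1 [h.a_eq]
      rw [Algebra.algebraMap_eq_smul_one]
      module
    · simp [frameDeriv_mul, frameDeriv_coordFn_zero, frameDeriv_coordFn_one, h.d₂_c,
        h.sigma_eq_zero hD, h.d₂_b_eq_zero hD]
  have := eq_algebraMap_of_frameDeriv_eq_zero hF
  simp only [Subalgebra.coe_add, Subalgebra.coe_sub, Subalgebra.coe_mul, Subalgebra.coe_smul,
    Pi.add_apply, Pi.sub_apply, Pi.mul_apply, Pi.smul_apply, coordFn_apply, Pi.zero_apply,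
    zero_mul, mul_zero, smul_zero, add_zero, sub_zero] at this
  rw [← this]
  abel

end IsFrameConformalKilling

theorem exists_eq_sum_rie3Basis {Y : Vec 3 → Vec 3}
    (hY : IsConformalKillingOn Set.univ rie3Metric Y) :
    ∃ c : Fin 4 → ℝ, Y = fun x => ∑ a, c a • rie3Basis a x := by
  obtain ⟨hs, f, hf⟩ := hY
  have hY := contDiffOn_univ.1 hs
  have h := isFrameConformalKilling_of_lieDerivEq hY hf
  refine ⟨![Y 0 1, Y 0 2, Y 0 0, (frameDeriv 1 (smoothComponent hY 0) : Vec 3 → ℝ) 0],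
    funext fun p => ?_⟩
  have ha := congr_fun (congrArg Subtype.val h.a_eq) p
  have hb := congr_fun (congrArg Subtype.val h.b_eq) p
  have hc := congr_fun (congrArg Subtype.val h.c_add_coordFn_mul_b_eq) p
  simp [smoothComponent_apply, coordFn_apply] at ha hb hc
  ext j
  fin_cases j <;> simp [Fin.sum_univ_four, rie3Basis, rie3X1, rie3X2, rie3X3, rie3X4]
  · linear_combination ha
  · linear_combination hb
  · linear_combination hc

/-- **Submaximally symmetric 3-dimensional Riemannian conformal structure.**
For `g = dx² + dy² + (dz − x dy)²` on `ℝ³`: the four listed fields are Killing,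
linearly independent, and span the space of all smooth conformal Killing fields,
which is hence of dimension exactly `4`. -/
theorem riemannian3_conformal_symmetry_dim :
    IsKillingOn Set.univ rie3Metric rie3X1 ∧
    IsKillingOn Set.univ rie3Metric rie3X2 ∧
    IsKillingOn Set.univ rie3Metric rie3X3 ∧
    IsKillingOn Set.univ rie3Metric rie3X4 ∧
    LinearIndependent ℝ rie3Basis ∧
    ∀ Y : Vec 3 → Vec 3, IsConformalKillingOn Set.univ rie3Metric Y →
      ∃ c : Fin 4 → ℝ, Y = fun x => ∑ a, c a • rie3Basis a x :=
  ⟨isKillingOn_rie3X1, isKillingOn_rie3X2, isKillingOn_rie3X3, isKillingOn_rie3X4,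
    linearIndependent_rie3Basis, fun _ => exists_eq_sum_rie3Basis⟩
end
end

section
/- Let K be a field and L a Lie algebra over K. Let g : ℤ → Submodule K L be a family of K-submodules of L such that: (i) for all i, j ∈ ℤ and all x ∈ g(i), y ∈ g(j), one has ⁅x, y⁆ ∈ g(i+j); and (ii) for every i ≤ −1, g(i−1) is contained in the K-span of {⁅x, y⁆ : x ∈ g(−1), y ∈ g(i)} (the negative part is generated by g(−1)). Let a₀ ⊆ g(0) be a K-submodule that is closed under the Lie bracket. Define A : ℤ → Submodule K L by A(i) = g(i) for i < 0, A(0) = a₀, and, recursively for k ≥ 0, A(k+1) = {X ∈ g(k+1) : ⁅X, v⁆ ∈ A(k) for all v ∈ g(−1)}. Then for all i, j ∈ ℤ and all x ∈ A(i), y ∈ A(j), one has ⁅x, y⁆ ∈ A(i+j); in particular the sum of all A(i) is a Lie subalgebra of L. -/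
/-- **The modified Tanaka prolongation is bracket-closed.**
Let `g : ℤ → Submodule K L` be a family of subspaces of a Lie algebra `L` over a field
`K` that is compatible with the bracket and whose negative part is generated by `g(−1)`.
Let `a₀ ⊆ g(0)` be a subalgebra, and let `A` be defined by `A(i) = g(i)` for `i < 0`,
`A(0) = a₀` and, recursively, `A(k+1) = {X ∈ g(k+1) : ⁅X, v⁆ ∈ A(k) for all v ∈ g(−1)}`.
Then `⁅A(i), A(j)⁆ ⊆ A(i+j)` for all `i, j`; in particular the sum of all `A(i)` is
closed under the bracket, i.e. is a Lie subalgebra of `L`. -/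
theorem tanaka_prolongation_bracket_closed
    {K L : Type*} [Field K] [LieRing L] [LieAlgebra K L]
    (g : ℤ → Submodule K L)
    (hgrade : ∀ i j : ℤ, ∀ x ∈ g i, ∀ y ∈ g j, ⁅x, y⁆ ∈ g (i + j))
    (hgen : ∀ i : ℤ, i ≤ -1 →
      g (i - 1) ≤ Submodule.span K {v : L | ∃ x ∈ g (-1), ∃ y ∈ g i, v = ⁅x, y⁆})
    (a₀ : Submodule K L) (ha₀ : a₀ ≤ g 0)
    (ha₀closed : ∀ x ∈ a₀, ∀ y ∈ a₀, ⁅x, y⁆ ∈ a₀)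
    (A : ℤ → Submodule K L)
    (hAneg : ∀ i : ℤ, i < 0 → A i = g i)
    (hAzero : A 0 = a₀)
    (hApos : ∀ k : ℕ, ∀ X : L,
      X ∈ A ((k : ℤ) + 1) ↔ X ∈ g ((k : ℤ) + 1) ∧ ∀ v ∈ g (-1), ⁅X, v⁆ ∈ A (k : ℤ)) :
    (∀ i j : ℤ, ∀ x ∈ A i, ∀ y ∈ A j, ⁅x, y⁆ ∈ A (i + j)) ∧
      ∀ x ∈ ⨆ i : ℤ, A i, ∀ y ∈ ⨆ i : ℤ, A i, ⁅x, y⁆ ∈ ⨆ i : ℤ, A i := by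
  have hAg : ∀ i : ℤ, A i ≤ g i := by
    intro i
    rcases lt_trichotomy i 0 with h | h | h
    · rw [hAneg i h]
    · subst h; rw [hAzero]; exact ha₀
    · obtain ⟨k, rfl⟩ : ∃ k : ℕ, i = (k : ℤ) + 1 := ⟨(i - 1).toNat, by omega⟩
      intro x hx
      exact ((hApos k x).1 hx).1
  have hbr : ∀ n : ℕ, ∀ y ∈ A ((n:ℤ)+1), ∀ v ∈ g (-1), ⁅y, v⁆ ∈ A (n:ℤ) :=
    fun n y hy v hv => ((hApos n y).1 hy).2 v hv
  have hbr' : ∀ n : ℕ, ∀ y ∈ A ((n:ℤ)+1), ∀ v ∈ g (-1), ⁅v, y⁆ ∈ A (n:ℤ) := by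
    intro n y hy v hv
    rw [← lie_skew]
    exact neg_mem (hbr n y hy v hv)
  have key : ∀ n : ℕ, ∀ i j : ℤ, i ≤ n → j ≤ n →
      ∀ x ∈ A i, ∀ y ∈ A j, ⁅x, y⁆ ∈ A (i + j) := by
    intro n
    induction n with
    | zero =>
      intro i j hi hj x hx y hy
      have hxg := hAg i hx
      have hyg := hAg j hy
      have hi' : i ≤ 0 := by exact_mod_cast hi
      have hj' : j ≤ 0 := by exact_mod_cast hj
      rcases lt_or_eq_of_le (show i + j ≤ 0 by omega) with h | h
      · rw [hAneg _ h]; exact hgrade i j x hxg y hyg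
      · have hi0 : i = 0 := by omega
        have hj0 : j = 0 := by omega
        subst hi0; subst hj0
        rw [show (0:ℤ) + 0 = 0 by ring, hAzero]
        rw [hAzero] at hx hy
        exact ha₀closed x hx y hy
    | succ n IH =>
      -- Brackets of `A i` (`i ≤ -1`) with `A (n+1)`, by downward induction via `hgen`.
      have Cneg : ∀ d : ℕ, ∀ z ∈ g (-1 - (d:ℤ)), ∀ y ∈ A ((n:ℤ)+1),
          ⁅z, y⁆ ∈ A ((n:ℤ) - (d:ℤ)) := by
        intro d
        induction d with
        | zero =>
          intro z hz y hy
          rw [show (n:ℤ) - ((0:ℕ):ℤ) = (n:ℤ) by omega]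
          exact hbr' n y hy z
            (by rwa [show (-1 - ((0:ℕ):ℤ)) = -1 by omega] at hz)
        | succ d IHd =>
          intro z hz y hy
          have hz' : z ∈ g ((-1 - (d:ℤ)) - 1) := by
            rwa [show (-1 - (d:ℤ)) - 1 = -1 - ((d+1:ℕ):ℤ) by push_cast; ring]
          have hspan := hgen (-1 - (d:ℤ)) (by omega) hz'
          clear hz hz'
          rw [show (n:ℤ) - ((d+1:ℕ):ℤ) = -1 + ((n:ℤ) - (d:ℤ)) by push_cast; ring]
          induction hspan using Submodule.span_induction with
          | mem w hw =>
            obtain ⟨u, hu, w', hw', rfl⟩ := hw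
            rw [lie_lie]
            have hwy : ⁅w', y⁆ ∈ A ((n:ℤ) - (d:ℤ)) := IHd w' hw' y hy
            have t1 : ⁅u, ⁅w', y⁆⁆ ∈ A (-1 + ((n:ℤ) - (d:ℤ))) := by
              refine IH (-1) ((n:ℤ) - (d:ℤ)) (by omega) (by omega) u ?_ _ hwy
              rw [hAneg (-1) (by omega)]; exact hu
            have huy : ⁅u, y⁆ ∈ A (n:ℤ) := hbr' n y hy u hu
            have t2 : ⁅w', ⁅u, y⁆⁆ ∈ A (-1 - (d:ℤ) + (n:ℤ)) := by
              refine IH (-1 - (d:ℤ)) (n:ℤ) (by omega) (by omega) w' ?_ _ huy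
              rw [hAneg _ (by omega)]; exact hw'
            rw [show -1 - (d:ℤ) + (n:ℤ) = -1 + ((n:ℤ) - (d:ℤ)) by ring] at t2
            exact sub_mem t1 t2
          | zero => rw [zero_lie]; exact zero_mem _
          | add a b _ _ ha hb => rw [add_lie]; exact add_mem ha hb
          | smul c a _ ha => rw [smul_lie]; exact Submodule.smul_mem _ c ha
      -- Brackets of `A d` (`0 ≤ d ≤ n+1`) with `A (n+1)`, by upward induction.
      have Cnn : ∀ d : ℕ, (d:ℤ) ≤ (n:ℤ) + 1 → ∀ x ∈ A (d:ℤ), ∀ y ∈ A ((n:ℤ)+1),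
          ⁅x, y⁆ ∈ A ((d:ℤ) + ((n:ℤ)+1)) := by
        intro d
        induction d with
        | zero =>
          intro _ x hx y hy
          rw [show ((0:ℕ):ℤ) + ((n:ℤ)+1) = (n:ℤ)+1 by omega]
          rw [show ((0:ℕ):ℤ) = (0:ℤ) by omega, hAzero] at hx
          refine (hApos n _).2 ⟨?_, ?_⟩
          · have := hgrade 0 ((n:ℤ)+1) x (ha₀ hx) y (hAg _ hy)
            rwa [show (0:ℤ) + ((n:ℤ)+1) = (n:ℤ)+1 by ring] at this
          · intro v hv
            rw [lie_lie]
            have hyv : ⁅y, v⁆ ∈ A (n:ℤ) := hbr n y hy v hv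
            have t1 : ⁅x, ⁅y, v⁆⁆ ∈ A (0 + (n:ℤ)) := by
              refine IH 0 (n:ℤ) (by omega) (by omega) x ?_ _ hyv
              rw [hAzero]; exact hx
            have hxv : ⁅x, v⁆ ∈ g (-1) := by
              have := hgrade 0 (-1) x (ha₀ hx) v hv
              rwa [show (0:ℤ) + -1 = -1 by ring] at this
            have t2 : ⁅y, ⁅x, v⁆⁆ ∈ A (n:ℤ) := hbr n y hy _ hxv
            rw [show (0:ℤ) + (n:ℤ) = (n:ℤ) by ring] at t1
            exact sub_mem t1 t2
        | succ d IHd =>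
          intro hd x hx y hy
          have hd' : (d:ℤ) ≤ (n:ℤ) := by push_cast at hd ⊢; omega
          have hx' : x ∈ A ((d:ℤ) + 1) := by
            rwa [show ((d+1:ℕ):ℤ) = (d:ℤ) + 1 by push_cast; ring] at hx
          rw [show ((d+1:ℕ):ℤ) + ((n:ℤ)+1) = ((d+n+1:ℕ):ℤ) + 1 by push_cast; ring]
          refine (hApos (d+n+1) _).2 ⟨?_, ?_⟩
          · have := hgrade ((d:ℤ)+1) ((n:ℤ)+1) x (hAg _ hx') y (hAg _ hy)
            rwa [show (d:ℤ) + 1 + ((n:ℤ)+1) = ((d+n+1:ℕ):ℤ) + 1 by push_cast; ring] at this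
          · intro v hv
            rw [lie_lie]
            rw [show ((d+n+1:ℕ):ℤ) = (d:ℤ) + ((n:ℤ)+1) by push_cast; ring]
            have hyv : ⁅y, v⁆ ∈ A (n:ℤ) := hbr n y hy v hv
            have t1 : ⁅x, ⁅y, v⁆⁆ ∈ A ((d:ℤ) + ((n:ℤ)+1)) := by
              rcases lt_or_eq_of_le hd' with h | h
              · have := IH ((d:ℤ)+1) (n:ℤ) (by omega) (by omega) x hx' _ hyv
                rwa [show (d:ℤ) + 1 + (n:ℤ) = (d:ℤ) + ((n:ℤ)+1) by ring] at this
              · -- d = n : use the inner induction hypothesis with skew-symmetry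
                rw [← lie_skew]
                refine neg_mem ?_
                exact IHd (by omega) _ (by rwa [← h] at hyv) x (by rwa [h] at hx')
            have hxv : ⁅x, v⁆ ∈ A (d:ℤ) := hbr d x hx' v hv
            have t2 : ⁅y, ⁅x, v⁆⁆ ∈ A ((d:ℤ) + ((n:ℤ)+1)) := by
              rw [← lie_skew]
              exact neg_mem (IHd (by omega) _ hxv y hy)
            exact sub_mem t1 t2
      -- combine: any bracket with `A (n+1)`
      have C : ∀ i : ℤ, i ≤ (n:ℤ) + 1 → ∀ x ∈ A i, ∀ y ∈ A ((n:ℤ)+1),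
          ⁅x, y⁆ ∈ A (i + ((n:ℤ)+1)) := by
        intro i hi x hx y hy
        rcases le_or_gt i (-1) with h | h
        · have hieq : i = -1 - ((-1 - i).toNat : ℤ) := by omega
          have hx' : x ∈ g (-1 - ((-1 - i).toNat : ℤ)) := by
            rw [← hieq, ← hAneg i (by omega)]; exact hx
          have := Cneg ((-1 - i).toNat) x hx' y hy
          rwa [show (n:ℤ) - ((-1 - i).toNat : ℤ) = i + ((n:ℤ)+1) by omega] at this
        · have hieq : i = (i.toNat : ℤ) := by omega
          have := Cnn i.toNat (by omega) x (by rwa [← hieq]) y hy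
          rwa [← hieq] at this
      intro i j hi hj x hx y hy
      have hi' : i ≤ (n:ℤ) + 1 := by push_cast at hi; omega
      have hj' : j ≤ (n:ℤ) + 1 := by push_cast at hj; omega
      rcases le_or_gt j (n:ℤ) with hjn | hjn
      · rcases le_or_gt i (n:ℤ) with hin | hin
        · exact IH i j hin hjn x hx y hy
        · have hieq : i = (n:ℤ) + 1 := by omega
          rw [← lie_skew]
          refine neg_mem ?_
          have := C j hj' y hy x (by rwa [hieq] at hx)
          rwa [show j + ((n:ℤ)+1) = i + j by omega] at this
      · have hjeq : j = (n:ℤ) + 1 := by omega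
        have := C i hi' x hx y (by rwa [hjeq] at hy)
        rwa [show i + ((n:ℤ)+1) = i + j by omega] at this
  have main : ∀ i j : ℤ, ∀ x ∈ A i, ∀ y ∈ A j, ⁅x, y⁆ ∈ A (i + j) := by
    intro i j x hx y hy
    exact key (i ⊔ j ⊔ 0).toNat i j (by omega) (by omega) x hx y hy
  refine ⟨main, ?_⟩
  intro x hx y hy
  induction hx using Submodule.iSup_induction' with
  | mem i x hxi =>
    induction hy using Submodule.iSup_induction' with
    | mem j y hyj =>
      exact Submodule.mem_iSup_of_mem (i + j) (main i j x hxi y hyj)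
    | zero => rw [lie_zero]; exact zero_mem _
    | add a b _ _ ha hb => rw [lie_add]; exact add_mem ha hb
  | zero => rw [zero_lie]; exact zero_mem _
  | add a b _ _ ha hb => rw [add_lie]; exact add_mem ha hb
end

section
/- Let ι be a type and c : ι → ι → ℤ a generalized Cartan matrix, and r : ι → ℤ with r(a) ≥ 0 for all a. Let i, j, k ∈ ι with k ≠ j. Then r(i) − (r(j)+1)·c(j,i) − (r(k)+1)·(c(k,i) − c(k,j)·c(j,i)) = 0 if and only if either (A) i ≠ j, i ≠ k, r(i) = 0, c(j,i) = 0 and c(k,i) = 0, or (B) k = i, c(i,j) = −1, c(j,i) = −1 and r(j) = 0. -/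
/-- **The non-prolongation-rigidity case list (F.1).**
Let `c` be a generalized Cartan matrix, `r` a family of nonnegative integers, and
`k ≠ j`.  Then `⟨−w·λ, αᵢ^∨⟩ = rᵢ − (rⱼ+1)c_{ji} − (r_k+1)(c_{ki} − c_{kj}c_{ji})`
vanishes if and only if either `i ∉ {j, k}` with `rᵢ = c_{ji} = c_{ki} = 0`, or
`k = i` with `c_{ij} = c_{ji} = −1` and `rⱼ = 0`. -/
theorem npr_vanishing_case_list {ι : Type*} (c : ι → ι → ℤ)
    (hdiag : ∀ i, c i i = 2)
    (hoff : ∀ i j, i ≠ j → c i j ≤ 0)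
    (hzero : ∀ i j, c i j = 0 ↔ c j i = 0)
    (r : ι → ℤ) (hr : ∀ a, 0 ≤ r a)
    (i j k : ι) (hkj : k ≠ j) :
    r i - (r j + 1) * c j i - (r k + 1) * (c k i - c k j * c j i) = 0 ↔
      ((i ≠ j ∧ i ≠ k ∧ r i = 0 ∧ c j i = 0 ∧ c k i = 0) ∨
        (k = i ∧ c i j = -1 ∧ c j i = -1 ∧ r j = 0)) := by
  rcases eq_or_ne i j with rfl | hij
  · -- case i = j : LHS never vanishes
    have h2 := hdiag i
    have hki := hoff k i hkj
    constructor
    · intro h; exfalso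
      nlinarith [hr i, hr k,
        mul_nonneg (by linarith [hr k] : (0:ℤ) ≤ r k + 1) (neg_nonneg.mpr hki)]
    · rintro (⟨h, _⟩ | ⟨rfl, _⟩)
      · exact absurd rfl h
      · exact absurd rfl hkj
  · rcases eq_or_ne k i with rfl | hik
    · -- case k = i
      have h2 := hdiag k
      have hji := hoff j k (Ne.symm hkj)
      have hkj' := hoff k j hkj
      constructor
      · intro h
        have hb : c j k ≠ 0 := by
          intro hb0
          have ha0 : c k j = 0 := (hzero j k).mp hb0
          rw [hb0, ha0, h2] at h
          nlinarith [hr k]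
        have hb1 : c j k ≤ -1 := by
          rcases lt_or_eq_of_le hji with h' | h'
          · omega
          · exact absurd h' hb
        have ha0 : c k j ≠ 0 := fun h0 => hb ((hzero k j).mp h0)
        have ha1 : c k j ≤ -1 := by
          rcases lt_or_eq_of_le hkj' with h' | h'
          · omega
          · exact absurd h' ha0
        have na : (0:ℤ) ≤ -c k j := by linarith
        have nb : (0:ℤ) ≤ -c j k := by linarith
        have hab : c k j * c j k = 1 := by
          rw [h2] at h
          nlinarith [hr k, hr j, mul_nonneg na nb]
        have ha : c k j = -1 := by nlinarith [mul_nonneg na nb]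
        have hb' : c j k = -1 := by nlinarith [mul_nonneg na nb]
        have hrj : r j = 0 := by
          rw [ha, hb', h2] at h; linarith
        exact Or.inr ⟨rfl, ha, hb', hrj⟩
      · rintro (⟨_, hik', _⟩ | ⟨_, ha, hb, hrj⟩)
        · exact absurd rfl hik'.symm
        · rw [ha, hb, hrj, h2]; ring
    · -- case i ∉ {j, k}
      have hji := hoff j i hij.symm
      have hki := hoff k i (Ne.symm hik).symm
      have hkj' := hoff k j hkj
      constructor
      · intro h
        have hx : c j i = 0 := by
          nlinarith [hr i, hr j, hr k, mul_nonneg (neg_nonneg.mpr hkj') (neg_nonneg.mpr hji),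
            mul_nonneg (by linarith [hr k] : (0:ℤ) ≤ r k + 1) (neg_nonneg.mpr hki),
            mul_nonneg (by linarith [hr k] : (0:ℤ) ≤ r k + 1)
              (mul_nonneg (neg_nonneg.mpr hkj') (neg_nonneg.mpr hji))]
        have hy : c k i = 0 := by
          rw [hx] at h
          nlinarith [hr i, hr k]
        refine Or.inl ⟨hij, fun h' => hik h'.symm, ?_, hx, hy⟩
        rw [hx, hy] at h; linarith
      · rintro (⟨_, _, hri, hx, hy⟩ | ⟨hik', _⟩)
        · rw [hri, hx, hy]; ring
        · exact absurd hik' hik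
end

section
/- Let ι be a type and c : ι → ι → ℤ a generalized Cartan matrix, and r : ι → ℤ with r(a) ≥ 0 for all a. Let i, j, k ∈ ι with k ≠ j, and suppose that either i = j, or both i = k and c(j,k) = 0. Then r(i) − (r(j)+1)·c(j,i) − (r(k)+1)·(c(k,i) − c(k,j)·c(j,i)) ≠ 0. -/
/-- **Prolongation-rigidity for maximal parabolics and commuting pairs.**
Let `c` be a generalized Cartan matrix, `r` a family of nonnegative integers, and
`k ≠ j`.  If `i = j`, or if `i = k` and `c j k = 0`, then
`⟨−w·λ, αᵢ^∨⟩ = rᵢ − (rⱼ+1)c_{ji} − (r_k+1)(c_{ki} − c_{kj}c_{ji})` does not vanish. -/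
theorem pr_nonvanishing {ι : Type*} (c : ι → ι → ℤ)
    (hdiag : ∀ i, c i i = 2)
    (hoff : ∀ i j, i ≠ j → c i j ≤ 0)
    (hzero : ∀ i j, c i j = 0 ↔ c j i = 0)
    (r : ι → ℤ) (hr : ∀ a, 0 ≤ r a)
    (i j k : ι) (hkj : k ≠ j)
    (hcase : i = j ∨ (i = k ∧ c j k = 0)) :
    r i - (r j + 1) * c j i - (r k + 1) * (c k i - c k j * c j i) ≠ 0 := by
  rcases hcase with rfl | ⟨rfl, hjk⟩
  · have h1 := hdiag i
    have h2 := hoff k i hkj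
    have h3 := hr i
    have h4 := hr k
    nlinarith [mul_nonpos_of_nonneg_of_nonpos (by linarith : (0:ℤ) ≤ r k + 1) h2]
  · have hkj' : c i j = 0 := (hzero j i).mp hjk
    rw [hjk, hkj', hdiag i]
    have := hr i
    have := hr j
    nlinarith
end
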